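/- arXiv:1907.12694 — 4 statements merged into one kernel-verified Lean document; each statement's English description precedes it below -/
import Mathlib

section
/- Let X be the simple symmetric random walk conditioned to stay positive (the h-transform with h(x)=x), started at 0, and let Z_n = max{X_1,...,X_n}. Then for every k ≥ 1, P(X_n ≥ k) ≥ (1/2) P(Z_n ≥ 2k). -/
open MeasureTheory ProbabilityTheory Finset

/-- The simple symmetric random walk conditioned to stay positive (Doob h-transform
with `h(x) = x`), started at `a`: transition probabilities `P(x, x±1) = (x±1)/(2x)` for
`x ≥ 1`, and a sure step from `0` to `1`. -/
structure IsHProcess {Ω : Type*} [MeasurableSpace Ω] (P : Measure Ω)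
    (X : ℕ → Ω → ℤ) (a : ℤ) : Prop where
  meas : ∀ n, Measurable (X n)
  start : ∀ᵐ ω ∂P, X 0 ω = a
  step_up : ∀ (n : ℕ) (s : ℕ → ℤ), 1 ≤ s n →
    P {ω | X (n+1) ω = s n + 1 ∧ ∀ i, i ≤ n → X i ω = s i}
      = ENNReal.ofReal (((s n : ℝ) + 1) / (2 * (s n : ℝ)))
          * P {ω | ∀ i, i ≤ n → X i ω = s i}
  step_down : ∀ (n : ℕ) (s : ℕ → ℤ), 1 ≤ s n →
    P {ω | X (n+1) ω = s n - 1 ∧ ∀ i, i ≤ n → X i ω = s i}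
      = ENNReal.ofReal (((s n : ℝ) - 1) / (2 * (s n : ℝ)))
          * P {ω | ∀ i, i ≤ n → X i ω = s i}
  step_zero : ∀ (n : ℕ) (s : ℕ → ℤ), s n = 0 →
    P {ω | X (n+1) ω = 1 ∧ ∀ i, i ≤ n → X i ω = s i}
      = P {ω | ∀ i, i ≤ n → X i ω = s i}

/-!
Split the event `Z_n ≥ 2k` at the first time the walk reaches `2k`. Since `1/X` is a martingale,
a walk started at `x ≥ K ≥ 1` stays at or above `K` forever with probability at least
`1 - (K-1)/x`; from `x ≥ 2k` this is at least `1/2`, so after reaching `2k` the walk ends at or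
above `k` with conditional probability at least `1/2`. The walk is only known through its
cylinder probabilities, so both first-passage estimates are proved by induction on the remaining
horizon, splitting a path cylinder into its two one-step extensions.
-/

theorem measureReal_restrict_congr {α : Type*} [MeasurableSpace α] {μ : Measure α}
    {C E E' : Set α} (hC : MeasurableSet C) (h : ∀ x ∈ C, x ∈ E ↔ x ∈ E') :
    (μ.restrict C).real E = (μ.restrict C).real E' :=
  measureReal_congr (Filter.eventuallyEq_set.mpr (ae_restrict_of_forall_mem hC h))

section Paths

variable {Ω : Type*} (X : ℕ → Ω → ℤ)

def pathCylinder (s : ℕ → ℤ) (j : ℕ) : Set Ω := {ω | ∀ i, i ≤ j → X i ω = s i}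

def staysAbove (K : ℤ) (j m : ℕ) : Set Ω := {ω | ∀ i, j ≤ i → i ≤ j + m → K ≤ X i ω}

def reaches (K : ℤ) (j m : ℕ) : Set Ω := {ω | ∃ i, j ≤ i ∧ i ≤ j + m ∧ K ≤ X i ω}

variable {X}

theorem measurableSet_pathCylinder [MeasurableSpace Ω] (hX : ∀ n, Measurable (X n))
    (s : ℕ → ℤ) (j : ℕ) : MeasurableSet (pathCylinder X s j) := by
  have : pathCylinder X s j = ⋂ i, ⋂ (_ : i ≤ j), X i ⁻¹' {s i} := by
    ext ω; simp [pathCylinder]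
  rw [this]
  exact .iInter fun i => .iInter fun _ => hX i (measurableSet_singleton _)

theorem pathCylinder_update_succ (s : ℕ → ℤ) (j : ℕ) (y : ℤ) :
    pathCylinder X (Function.update s (j + 1) y) (j + 1)
      = {ω | X (j + 1) ω = y ∧ ∀ i, i ≤ j → X i ω = s i} := by
  ext ω
  simp only [pathCylinder, Nat.le_succ_iff_eq_or_le]
  constructor
  · intro h
    refine ⟨by simpa using h (j + 1) (.inl rfl), fun i hi => ?_⟩
    simpa [Function.update_of_ne (by omega : i ≠ j + 1)] using h i (.inr hi)
  · rintro ⟨hy, hs⟩ i (rfl | hi)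
    · simpa using hy
    · simpa [Function.update_of_ne (by omega : i ≠ j + 1)] using hs i hi

theorem pathCylinder_update_succ_subset (s : ℕ → ℤ) (j : ℕ) (y : ℤ) :
    pathCylinder X (Function.update s (j + 1) y) (j + 1) ⊆ pathCylinder X s j := by
  rw [pathCylinder_update_succ]
  exact fun ω hω => hω.2

theorem mem_staysAbove_succ_iff {K : ℤ} {s : ℕ → ℤ} {j : ℕ} (hs : K ≤ s j) (m : ℕ)
    {ω : Ω} (hω : ω ∈ pathCylinder X s (j + 1)) :
    ω ∈ staysAbove X K j (m + 1) ↔ ω ∈ staysAbove X K (j + 1) m := by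
  have hj : X j ω = s j := hω j (by omega)
  constructor
  · exact fun h i hi hi' => h i (by omega) (by omega)
  · intro h i hi hi'
    rcases hi.eq_or_lt with rfl | hlt
    · exact hj ▸ hs
    · exact h i hlt (by omega)

theorem mem_reaches_succ_iff {K : ℤ} {s : ℕ → ℤ} {j : ℕ} (hs : s j < K) (m : ℕ)
    {ω : Ω} (hω : ω ∈ pathCylinder X s (j + 1)) :
    ω ∈ reaches X K j (m + 1) ↔ ω ∈ reaches X K (j + 1) m := by
  have hj : X j ω = s j := hω j (by omega)
  constructor
  · rintro ⟨i, hi, hi', hK⟩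
    rcases hi.eq_or_lt with rfl | hlt
    · omega
    · exact ⟨i, hlt, by omega, hK⟩
  · rintro ⟨i, hi, hi', hK⟩
    exact ⟨i, by omega, by omega, hK⟩

end Paths

namespace IsHProcess

variable {Ω : Type*} [MeasurableSpace Ω] {P : Measure Ω} {X : ℕ → Ω → ℤ} {a : ℤ}
  {s : ℕ → ℤ} {j : ℕ}

theorem restrict_pathCylinder_zero (hX : IsHProcess P X a) (hs : s 0 = a) :
    P.restrict (pathCylinder X s 0) = P :=
  Measure.restrict_eq_self_of_ae_mem <| hX.start.mono fun ω hω i hi => by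
    rw [Nat.le_zero.mp hi, hω, hs]

theorem measure_pathCylinder_up (hX : IsHProcess P X a) (hs : 1 ≤ s j) :
    P (pathCylinder X (Function.update s (j + 1) (s j + 1)) (j + 1))
      = ENNReal.ofReal (((s j : ℝ) + 1) / (2 * s j)) * P (pathCylinder X s j) := by
  rw [pathCylinder_update_succ]
  exact hX.step_up j s hs

theorem measure_pathCylinder_down (hX : IsHProcess P X a) (hs : 1 ≤ s j) :
    P (pathCylinder X (Function.update s (j + 1) (s j - 1)) (j + 1))
      = ENNReal.ofReal (((s j : ℝ) - 1) / (2 * s j)) * P (pathCylinder X s j) := by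
  rw [pathCylinder_update_succ]
  exact hX.step_down j s hs

theorem measureReal_pathCylinder_up (hX : IsHProcess P X a) (hs : 1 ≤ s j) :
    P.real (pathCylinder X (Function.update s (j + 1) (s j + 1)) (j + 1))
      = ((s j : ℝ) + 1) / (2 * s j) * P.real (pathCylinder X s j) := by
  have hx : (1 : ℝ) ≤ s j := by exact_mod_cast hs
  rw [measureReal_def, hX.measure_pathCylinder_up hs, ENNReal.toReal_mul,
    ENNReal.toReal_ofReal (by positivity), measureReal_def]

theorem measureReal_pathCylinder_down (hX : IsHProcess P X a) (hs : 1 ≤ s j) :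
    P.real (pathCylinder X (Function.update s (j + 1) (s j - 1)) (j + 1))
      = ((s j : ℝ) - 1) / (2 * s j) * P.real (pathCylinder X s j) := by
  have hx : (1 : ℝ) ≤ s j := by exact_mod_cast hs
  rw [measureReal_def, hX.measure_pathCylinder_down hs, ENNReal.toReal_mul,
    ENNReal.toReal_ofReal (div_nonneg (by linarith) (by positivity)), measureReal_def]

variable [IsFiniteMeasure P]

theorem restrict_pathCylinder_eq_add (hX : IsHProcess P X a) (hs : 1 ≤ s j) :
    P.restrict (pathCylinder X s j)
      = P.restrict (pathCylinder X (Function.update s (j + 1) (s j + 1)) (j + 1))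
        + P.restrict (pathCylinder X (Function.update s (j + 1) (s j - 1)) (j + 1)) := by
  set U := pathCylinder X (Function.update s (j + 1) (s j + 1)) (j + 1)
  set D := pathCylinder X (Function.update s (j + 1) (s j - 1)) (j + 1)
  have hx : (1 : ℝ) ≤ s j := by exact_mod_cast hs
  have hUD : Disjoint U D := by
    rw [Set.disjoint_left]
    intro ω hU hD
    have h := (hU (j + 1) le_rfl).symm.trans (hD (j + 1) le_rfl)
    simp only [Function.update_self] at h
    omega
  have hD : MeasurableSet D := measurableSet_pathCylinder hX.meas _ _
  have hmass : P (U ∪ D) = P (pathCylinder X s j) := by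
    rw [measure_union hUD hD, hX.measure_pathCylinder_up hs, hX.measure_pathCylinder_down hs,
      ← add_mul, ← ENNReal.ofReal_add (by positivity) (div_nonneg (by linarith) (by positivity))]
    have : ((s j : ℝ) + 1) / (2 * s j) + ((s j : ℝ) - 1) / (2 * s j) = 1 := by
      field_simp; ring
    rw [this, ENNReal.ofReal_one, one_mul]
  have hae : (U ∪ D : Set Ω) =ᵐ[P] pathCylinder X s j :=
    ae_eq_of_subset_of_measure_ge
      (Set.union_subset (pathCylinder_update_succ_subset s j _)
        (pathCylinder_update_succ_subset s j _))
      hmass.ge ((measurableSet_pathCylinder hX.meas _ _).union hD).nullMeasurableSet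
      (measure_ne_top _ _)
  rw [← Measure.restrict_congr_set hae, Measure.restrict_union hUD hD]

theorem restrict_pathCylinder_eq_of_eq_zero (hX : IsHProcess P X a) (hs : s j = 0) :
    P.restrict (pathCylinder X s j)
      = P.restrict (pathCylinder X (Function.update s (j + 1) 1) (j + 1)) := by
  have hmass : P (pathCylinder X (Function.update s (j + 1) 1) (j + 1))
      = P (pathCylinder X s j) := by
    rw [pathCylinder_update_succ]
    exact hX.step_zero j s hs
  refine (Measure.restrict_congr_set ?_).symm
  exact ae_eq_of_subset_of_measure_ge (pathCylinder_update_succ_subset s j _) hmass.ge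
    (measurableSet_pathCylinder hX.meas _ _).nullMeasurableSet (measure_ne_top _ _)

theorem one_sub_div_mul_le_measureReal_staysAbove (hX : IsHProcess P X a) {K : ℤ}
    (hK : 1 ≤ K) (m : ℕ) (hs : K ≤ s j) :
    (1 - ((K : ℝ) - 1) / s j) * P.real (pathCylinder X s j)
      ≤ (P.restrict (pathCylinder X s j)).real (staysAbove X K j m) := by
  induction m generalizing s j with
  | zero =>
    have hKr : (1 : ℝ) ≤ K := by exact_mod_cast hK
    have hx : (K : ℝ) ≤ s j := by exact_mod_cast hs
    have hall : ∀ ω ∈ pathCylinder X s j, ω ∈ staysAbove X K j 0 ↔ ω ∈ Set.univ :=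
      fun ω hω => iff_of_true (fun i hi hi' => by
        obtain rfl : i = j := by omega
        rw [hω i le_rfl]; exact hs) trivial
    rw [measureReal_restrict_congr (measurableSet_pathCylinder hX.meas s j) hall,
      measureReal_restrict_apply_univ]
    exact mul_le_of_le_one_left measureReal_nonneg
      (sub_le_self _ (div_nonneg (by linarith) (by linarith)))
  | succ m ih =>
    have hs1 : 1 ≤ s j := hK.trans hs
    have hx : (1 : ℝ) ≤ s j := by exact_mod_cast hs1
    have hxK : (K : ℝ) ≤ s j := by exact_mod_cast hs
    have hstep : ∀ y, K ≤ y → (1 - ((K : ℝ) - 1) / y)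
          * P.real (pathCylinder X (Function.update s (j + 1) y) (j + 1))
        ≤ (P.restrict (pathCylinder X (Function.update s (j + 1) y) (j + 1))).real
            (staysAbove X K j (m + 1)) := by
      intro y hy
      rw [measureReal_restrict_congr (measurableSet_pathCylinder hX.meas _ _)
        (fun ω hω => mem_staysAbove_succ_iff (by simpa using hs) m hω)]
      simpa using ih (s := Function.update s (j + 1) y) (j := j + 1) (by simpa using hy)
    have hup : ((s j : ℝ) + 2 - K) / (2 * s j) * P.real (pathCylinder X s j)
        ≤ (P.restrict (pathCylinder X (Function.update s (j + 1) (s j + 1)) (j + 1))).real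
            (staysAbove X K j (m + 1)) := by
      refine le_trans (le_of_eq ?_) (hstep _ (by omega))
      rw [hX.measureReal_pathCylinder_up hs1]
      push_cast
      field_simp
      ring
    have hdown : ((s j : ℝ) - K) / (2 * s j) * P.real (pathCylinder X s j)
        ≤ (P.restrict (pathCylinder X (Function.update s (j + 1) (s j - 1)) (j + 1))).real
            (staysAbove X K j (m + 1)) := by
      rcases hs.eq_or_lt with hKx | hKx
      · rw [← hKx, sub_self, zero_div, zero_mul]
        exact measureReal_nonneg
      · refine le_trans (le_of_eq ?_) (hstep _ (by omega))
        have hx1 : (s j : ℝ) - 1 ≠ 0 := by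
          have : (1 : ℝ) < s j := by exact_mod_cast hK.trans_lt hKx
          linarith
        rw [hX.measureReal_pathCylinder_down hs1]
        push_cast
        field_simp
        ring
    -- one-step average of the harmonic function `x ↦ 1 - (K-1)/x`, which vanishes at `K - 1`
    have hsplit : (1 - ((K : ℝ) - 1) / s j)
        = ((s j : ℝ) + 2 - K) / (2 * s j) + ((s j : ℝ) - K) / (2 * s j) := by
      field_simp
      ring
    rw [hX.restrict_pathCylinder_eq_add hs1, measureReal_add_apply, hsplit, add_mul]
    exact add_le_add hup hdown

theorem measureReal_pathCylinder_le_two_mul_endpoint (hX : IsHProcess P X a) {K : ℤ}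
    (hK : 1 ≤ K) (m : ℕ) (hs : 2 * K ≤ s j) :
    P.real (pathCylinder X s j)
      ≤ 2 * (P.restrict (pathCylinder X s j)).real {ω | K ≤ X (j + m) ω} := by
  have hx : (2 * K : ℝ) ≤ s j := by exact_mod_cast hs
  have hKr : (1 : ℝ) ≤ K := by exact_mod_cast hK
  have hhalf : ((K : ℝ) - 1) / s j ≤ 1 / 2 := by
    rw [div_le_iff₀ (by linarith)]
    linarith
  have hend : staysAbove X K j m ⊆ {ω | K ≤ X (j + m) ω} :=
    fun ω hω => hω (j + m) (by omega) le_rfl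
  calc P.real (pathCylinder X s j)
      ≤ 2 * ((1 - ((K : ℝ) - 1) / s j) * P.real (pathCylinder X s j)) := by
        nlinarith [measureReal_nonneg (μ := P) (s := pathCylinder X s j)]
    _ ≤ 2 * (P.restrict (pathCylinder X s j)).real (staysAbove X K j m) := by
        gcongr
        exact hX.one_sub_div_mul_le_measureReal_staysAbove hK m (by omega)
    _ ≤ 2 * (P.restrict (pathCylinder X s j)).real {ω | K ≤ X (j + m) ω} :=
        mul_le_mul_of_nonneg_left (measureReal_mono hend) zero_le_two

theorem measureReal_reaches_two_mul_le (hX : IsHProcess P X a) {K : ℤ} (hK : 1 ≤ K) (m : ℕ)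
    (hs : 0 ≤ s j) :
    (P.restrict (pathCylinder X s j)).real (reaches X (2 * K) j m)
      ≤ 2 * (P.restrict (pathCylinder X s j)).real {ω | K ≤ X (j + m) ω} := by
  induction m generalizing s j with
  | zero =>
    have hend : reaches X (2 * K) j 0 ⊆ {ω | K ≤ X (j + 0) ω} := by
      rintro ω ⟨i, hi, hi', hKi⟩
      obtain rfl : i = j := by omega
      show K ≤ X i ω
      omega
    linarith [measureReal_mono (μ := P.restrict (pathCylinder X s j)) hend,
      measureReal_nonneg (μ := P.restrict (pathCylinder X s j)) (s := {ω | K ≤ X (j + 0) ω})]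
  | succ m ih =>
    rcases le_or_gt (2 * K) (s j) with hreach | hlow
    · calc (P.restrict (pathCylinder X s j)).real (reaches X (2 * K) j (m + 1))
          ≤ (P.restrict (pathCylinder X s j)).real Set.univ := measureReal_mono (Set.subset_univ _)
        _ = P.real (pathCylinder X s j) := measureReal_restrict_apply_univ _
        _ ≤ _ := hX.measureReal_pathCylinder_le_two_mul_endpoint hK (m + 1) hreach
    have hstep : ∀ y, 0 ≤ y →
        (P.restrict (pathCylinder X (Function.update s (j + 1) y) (j + 1))).real
            (reaches X (2 * K) j (m + 1))
          ≤ 2 * (P.restrict (pathCylinder X (Function.update s (j + 1) y) (j + 1))).real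
            {ω | K ≤ X (j + (m + 1)) ω} := by
      intro y hy
      rw [measureReal_restrict_congr (measurableSet_pathCylinder hX.meas _ _)
        (fun ω hω => mem_reaches_succ_iff (by simpa using hlow) m hω),
        show j + (m + 1) = j + 1 + m by omega]
      exact ih (s := Function.update s (j + 1) y) (j := j + 1) (by simpa using hy)
    rcases hs.eq_or_lt with hzero | hpos
    · rw [hX.restrict_pathCylinder_eq_of_eq_zero hzero.symm]
      exact hstep 1 zero_le_one
    · rw [hX.restrict_pathCylinder_eq_add hpos, measureReal_add_apply, measureReal_add_apply]
      linarith [hstep _ (by omega : 0 ≤ s j + 1), hstep _ (by omega : 0 ≤ s j - 1)]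

end IsHProcess

/-- For the walk conditioned to stay positive started at `0`, with
`Z_n = max{X_1, …, X_n}`: for every `k ≥ 1`, `P(X_n ≥ k) ≥ (1/2) P(Z_n ≥ 2k)`. -/
theorem h_process_max_vs_endpoint
    {Ω : Type*} [MeasurableSpace Ω] (P : Measure Ω) [IsProbabilityMeasure P]
    (X : ℕ → Ω → ℤ) (hX : IsHProcess P X 0)
    (n k : ℕ) (hn : 1 ≤ n) (hk : 1 ≤ k) :
    (1/2) * P {ω | (2 * k : ℤ) ≤
        (Finset.Icc 1 n).sup' (Finset.nonempty_Icc.mpr hn) (fun j => X j ω)}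
      ≤ P {ω | (k : ℤ) ≤ X n ω} := by
  have hbound := hX.measureReal_reaches_two_mul_le (Nat.one_le_cast.mpr hk) n
    (s := fun _ => 0) (j := 0) le_rfl
  rw [hX.restrict_pathCylinder_zero (s := fun _ => 0) rfl, zero_add] at hbound
  have hmax : {ω | (2 * k : ℤ) ≤
      (Finset.Icc 1 n).sup' (Finset.nonempty_Icc.mpr hn) (fun j => X j ω)}
      ⊆ reaches X (2 * k) 0 n := by
    intro ω hω
    obtain ⟨i, hi, hXi⟩ := (Finset.le_sup'_iff _).mp (show (2 * k : ℤ) ≤ _ from hω)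
    exact ⟨i, Nat.zero_le i, by simpa using (Finset.mem_Icc.mp hi).2, hXi⟩
  have hreach : P (reaches X (2 * k) 0 n) ≤ 2 * P {ω | (k : ℤ) ≤ X n ω} := by
    rw [← ofReal_measureReal, ← ofReal_measureReal, ← ENNReal.ofReal_ofNat 2,
      ← ENNReal.ofReal_mul zero_le_two]
    exact ENNReal.ofReal_le_ofReal hbound
  calc (1/2) * P {ω | (2 * k : ℤ) ≤
        (Finset.Icc 1 n).sup' (Finset.nonempty_Icc.mpr hn) (fun j => X j ω)}
      ≤ (1/2) * (2 * P {ω | (k : ℤ) ≤ X n ω}) := by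
        gcongr
        exact (measure_mono hmax).trans hreach
    _ = P {ω | (k : ℤ) ≤ X n ω} := by
      rw [← mul_assoc, one_div, ENNReal.inv_mul_cancel two_ne_zero ENNReal.ofNat_ne_top, one_mul]
end

section
/- Let X be the simple symmetric random walk conditioned to stay positive, started at 0, and Z_n = max{X_1,...,X_n}. Then E[Z_n] ≤ 1 + 4 E[X_n]. -/
open MeasureTheory ProbabilityTheory Finset

/-!
For the walk conditioned to stay positive, `1 / X` is a supermartingale. Hence, by Markov's
inequality for `1 / X_n`, a walk that sits at `2k` at a time `j ≤ n` is below `k` at time `n`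
with conditional probability at most `(k - 1) / (2k) < 1 / 2`. The walk never jumps up by more
than one, so on `{Z_n ≥ 2k}` it hits `2k` exactly; splitting this event according to the first
passage time gives `P(Z_n ≥ 2k, X_n < k) ≤ P(Z_n ≥ 2k) / 2`, that is
`P(Z_n ≥ 2k) ≤ 2 P(X_n ≥ k)`. Writing `E[Z_n] = ∑_{m ≥ 1} P(Z_n ≥ m)`, bounding the term `m = 1`
by `1` and the terms `m = 2k, 2k + 1` by `2 P(X_n ≥ k)` each gives the constants `1` and `4`.
-/

theorem le_add_of_step_le {x : ℕ → ℤ} (hstep : ∀ m, x (m + 1) ≤ x m + 1) (m : ℕ) :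
    x m ≤ x 0 + m := by
  induction m with
  | zero => simp
  | succ m ih => have := hstep m; push_cast; omega

theorem exists_first_eq_of_step_le {x : ℕ → ℤ} (hstep : ∀ m, x (m + 1) ≤ x m + 1) {b : ℤ}
    (h0 : x 0 < b) {j : ℕ} (hj : b ≤ x j) : ∃ i ≤ j, x i = b ∧ ∀ l < i, x l < b := by
  classical
  have hex : ∃ i, b ≤ x i := ⟨j, hj⟩
  have hmin (l : ℕ) (hl : l < Nat.find hex) : x l < b := not_le.mp (Nat.find_min hex hl)
  refine ⟨Nat.find hex, Nat.find_min' hex hj, ?_, hmin⟩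
  have hspec := Nat.find_spec hex
  obtain ⟨l, hl⟩ : ∃ l, Nat.find hex = l + 1 :=
    Nat.exists_eq_add_one_of_ne_zero fun h => by rw [h] at hspec; omega
  have := hmin l (by omega)
  have := hstep l
  rw [hl] at hspec ⊢
  omega

theorem ite_lt_le_mul_inv {y k : ℤ} (hy : 1 ≤ y) (hk : 1 ≤ k) :
    (if y < k then 1 else 0 : ℝ) ≤ (k - 1) * (y : ℝ)⁻¹ := by
  have hy' : (0 : ℝ) < y := by exact_mod_cast hy
  split_ifs with hyk
  · rw [← div_eq_mul_inv, le_div_iff₀ hy', one_mul]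
    exact_mod_cast (by omega : y ≤ k - 1)
  · have : (1 : ℝ) ≤ k := by exact_mod_cast hk
    positivity

theorem abs_inv_intCast_le_one (z : ℤ) : |(z : ℝ)⁻¹| ≤ 1 := by
  rcases eq_or_ne z 0 with rfl | hz
  · simp
  rw [abs_inv]
  exact inv_le_one_of_one_le₀ (by exact_mod_cast Int.one_le_abs hz)

theorem intCast_eq_sum_range_ite {y : ℤ} {N : ℕ} (h0 : 0 ≤ y) (hN : y ≤ N) :
    (y : ℝ) = ∑ m ∈ range N, if (m : ℤ) < y then 1 else 0 := by
  rw [sum_boole]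
  have : (range N).filter (fun m : ℕ => (m : ℤ) < y) = range y.toNat := by
    ext m
    simp only [mem_filter, mem_range]
    omega
  rw [this, card_range]
  exact_mod_cast (Int.toNat_of_nonneg h0).symm

theorem sum_range_two_mul_add_one_le {p q : ℕ → ℝ} (h0 : p 0 ≤ 1)
    (hodd : ∀ k, p (2 * k + 1) ≤ 2 * q k) (heven : ∀ k, p (2 * k + 2) ≤ 2 * q k) (n : ℕ) :
    ∑ m ∈ range (2 * n + 1), p m ≤ 1 + 4 * ∑ k ∈ range n, q k := by
  induction n with
  | zero => simpa using h0
  | succ n ih =>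
    rw [show 2 * (n + 1) + 1 = 2 * n + 1 + 1 + 1 by ring, sum_range_succ, sum_range_succ,
      sum_range_succ q]
    linarith [hodd n, heven n]

section Measure

variable {Ω : Type*} [MeasurableSpace Ω] {μ : Measure Ω}

theorem measure_le_of_forall_fiber_le {β : Type*} [Countable β] [MeasurableSpace β]
    [MeasurableSingletonClass β] {f : Ω → β} (hf : Measurable f) {ν : Measure Ω} {A : Set Ω}
    (hA : ∀ ω ∈ A, f ⁻¹' {f ω} ⊆ A) (h : ∀ ω ∈ A, μ (f ⁻¹' {f ω}) ≤ ν (f ⁻¹' {f ω})) :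
    μ A ≤ ν A := by
  have hA' : f ⁻¹' (f '' A) = A :=
    (Set.subset_preimage_image f A).antisymm' fun ω ⟨ω', hω', hf'⟩ => hA ω' hω' hf'.symm
  have hmeas : ∀ y ∈ f '' A, MeasurableSet (f ⁻¹' {y}) :=
    fun y _ => hf (measurableSet_singleton y)
  rw [← hA', ← tsum_measure_preimage_singleton (Set.to_countable _) hmeas,
    ← tsum_measure_preimage_singleton (Set.to_countable _) hmeas]
  exact ENNReal.tsum_le_tsum fun ⟨_, ω, hω, rfl⟩ => h ω hω

theorem inter_ae_eq_left_of_measureReal_eq [IsFiniteMeasure μ] {C E : Set Ω}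
    (hCE : MeasurableSet (C ∩ E)) (h : μ.real (C ∩ E) = μ.real C) :
    (C ∩ E : Set Ω) =ᵐ[μ] C :=
  ae_eq_of_subset_of_measure_ge Set.inter_subset_left
    ((measureReal_eq_measureReal_iff).mp h).ge hCE.nullMeasurableSet (measure_ne_top μ C)

theorem integrable_inv_intCast [IsFiniteMeasure μ] {Y : Ω → ℤ} (hY : Measurable Y) :
    Integrable (fun ω => (Y ω : ℝ)⁻¹) μ :=
  .of_bound (by fun_prop) 1 (ae_of_all _ fun ω => abs_inv_intCast_le_one (Y ω))

theorem integral_intCast_eq_sum_measureReal_lt [IsFiniteMeasure μ] {Y : Ω → ℤ}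
    (hY : Measurable Y) {N : ℕ} (hb : ∀ᵐ ω ∂μ, 0 ≤ Y ω ∧ Y ω ≤ N) :
    ∫ ω, (Y ω : ℝ) ∂μ = ∑ m ∈ range N, μ.real {ω | (m : ℤ) < Y ω} := by
  have hmeas (m : ℕ) : MeasurableSet {ω | (m : ℤ) < Y ω} := hY measurableSet_Ioi
  have hind (m : ℕ) : (fun ω => if (m : ℤ) < Y ω then (1 : ℝ) else 0)
      = {ω | (m : ℤ) < Y ω}.indicator 1 := by
    ext ω
    simp [Set.indicator_apply]
  rw [integral_congr_ae (hb.mono fun ω hω => intCast_eq_sum_range_ite hω.1 hω.2),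
    integral_finsetSum _ fun m _ => hind m ▸ (integrable_const 1).indicator (hmeas m)]
  exact sum_congr rfl fun m _ => by rw [hind, integral_indicator_one (hmeas m)]

end Measure

section Cylinder

variable {Ω : Type*}

def cylSet (X : ℕ → Ω → ℤ) (j : ℕ) (s : ℕ → ℤ) : Set Ω :=
  {ω | ∀ i, i ≤ j → X i ω = s i}

def firstHit (X : ℕ → Ω → ℤ) (b : ℤ) (j : ℕ) : Set Ω :=
  {ω | X j ω = b ∧ ∀ i < j, X i ω < b}

theorem cylSet_succ (X : ℕ → Ω → ℤ) (j : ℕ) (s : ℕ → ℤ) (a : ℤ) :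
    cylSet X (j + 1) (Function.update s (j + 1) a) = cylSet X j s ∩ {ω | X (j + 1) ω = a} := by
  ext ω
  simp only [cylSet, Set.mem_inter_iff, Set.mem_ofPred_eq, Nat.le_succ_iff_eq_or_le, or_imp,
    forall_and, forall_eq, Function.update_self]
  rw [and_comm]
  refine and_congr_left' (forall₂_congr fun i hi => ?_)
  rw [Function.update_of_ne (by omega)]

variable [MeasurableSpace Ω] {X : ℕ → Ω → ℤ}

theorem measurableSet_cylSet (hX : ∀ n, Measurable (X n)) (j : ℕ) (s : ℕ → ℤ) :
    MeasurableSet (cylSet X j s) := by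
  simp only [cylSet, Set.ofPred_forall]
  exact .iInter fun i => .iInter fun _ => hX i (measurableSet_singleton _)

theorem measurableSet_firstHit (hX : ∀ n, Measurable (X n)) (b : ℤ) (j : ℕ) :
    MeasurableSet (firstHit X b j) := by
  simp only [firstHit, Set.ofPred_and, Set.ofPred_forall]
  exact (hX j (measurableSet_singleton b)).inter
    (.iInter fun i => .iInter fun _ => hX i measurableSet_Iio)

/-- The hypothesis `hA` says that `A` is determined by `X 0, …, X j`; such an event is a countable
disjoint union of cylinders. -/
theorem measure_le_of_cylSet_le (hX : ∀ n, Measurable (X n)) {μ ν : Measure Ω} {j : ℕ}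
    {A : Set Ω} (hA : ∀ ω ∈ A, cylSet X j (X · ω) ⊆ A)
    (h : ∀ ω ∈ A, μ (cylSet X j (X · ω)) ≤ ν (cylSet X j (X · ω))) : μ A ≤ ν A := by
  have hfib (ω : Ω) : (fun ω' (i : Fin (j + 1)) => X i ω') ⁻¹' {fun i : Fin (j + 1) => X i ω} =
      cylSet X j (X · ω) := by
    ext ω'
    simp [cylSet, funext_iff, Fin.forall_iff]
  refine measure_le_of_forall_fiber_le (f := fun ω (i : Fin (j + 1)) => X i ω)
    (measurable_pi_lambda _ fun i => hX i) (fun ω hω => ?_) (fun ω hω => ?_)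
  · rw [hfib]; exact hA ω hω
  · rw [hfib]; exact h ω hω

theorem ae_restrict_of_forall_ae_restrict_cylSet (hX : ∀ n, Measurable (X n)) {P : Measure Ω}
    {j : ℕ} {A : Set Ω} (hAm : MeasurableSet A) (hA : ∀ ω ∈ A, cylSet X j (X · ω) ⊆ A)
    {Q : Ω → Prop} (h : ∀ ω ∈ A, ∀ᵐ ω' ∂P.restrict (cylSet X j (X · ω)), Q ω') :
    ∀ᵐ ω ∂P.restrict A, Q ω := by
  rw [ae_iff, Measure.restrict_apply' hAm, Set.inter_comm, ← Measure.restrict_apply hAm,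
    ← nonpos_iff_eq_zero]
  refine measure_le_of_cylSet_le hX (ν := 0) hA fun ω hω => ?_
  have hC := measurableSet_cylSet hX j (X · ω)
  rw [Measure.restrict_apply hC, Set.inter_comm, ← Measure.restrict_apply' hC]
  exact (ae_iff.mp (h ω hω)).le

end Cylinder

namespace IsHProcess

variable {Ω : Type*} [MeasurableSpace Ω] {P : Measure Ω} {X : ℕ → Ω → ℤ} {a : ℤ} {j : ℕ}
  {s : ℕ → ℤ}

theorem measureReal_cylSet_inter_up (hX : IsHProcess P X a) (hs : 1 ≤ s j) :
    P.real (cylSet X j s ∩ {ω | X (j + 1) ω = s j + 1})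
      = (s j + 1) / (2 * s j) * P.real (cylSet X j s) := by
  have h1 : (1 : ℝ) ≤ s j := by exact_mod_cast hs
  have h := congrArg ENNReal.toReal (hX.step_up j s hs)
  rw [ENNReal.toReal_mul, ENNReal.toReal_ofReal (div_nonneg (by linarith) (by linarith))] at h
  rw [Set.inter_comm]
  exact h

theorem measureReal_cylSet_inter_down (hX : IsHProcess P X a) (hs : 1 ≤ s j) :
    P.real (cylSet X j s ∩ {ω | X (j + 1) ω = s j - 1})
      = (s j - 1) / (2 * s j) * P.real (cylSet X j s) := by
  have h1 : (1 : ℝ) ≤ s j := by exact_mod_cast hs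
  have h := congrArg ENNReal.toReal (hX.step_down j s hs)
  rw [ENNReal.toReal_mul, ENNReal.toReal_ofReal (div_nonneg (by linarith) (by linarith))] at h
  rw [Set.inter_comm]
  exact h

theorem measureReal_cylSet_inter_zero (hX : IsHProcess P X a) (hs : s j = 0) :
    P.real (cylSet X j s ∩ {ω | X (j + 1) ω = 1}) = P.real (cylSet X j s) := by
  rw [Set.inter_comm]
  exact congrArg ENNReal.toReal (hX.step_zero j s hs)

variable [IsFiniteMeasure P]

theorem cylSet_inter_up_union_down_ae_eq (hX : IsHProcess P X a) (hs : 1 ≤ s j) :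
    (cylSet X j s ∩ ({ω | X (j + 1) ω = s j + 1} ∪ {ω | X (j + 1) ω = s j - 1}) : Set Ω)
      =ᵐ[P] cylSet X j s := by
  have hC := measurableSet_cylSet hX.meas j s
  have hmeas (b : ℤ) : MeasurableSet {ω | X (j + 1) ω = b} :=
    hX.meas _ (measurableSet_singleton b)
  have hs' : (s j : ℝ) ≠ 0 := by norm_cast; omega
  refine inter_ae_eq_left_of_measureReal_eq (hC.inter ((hmeas _).union (hmeas _))) ?_
  rw [Set.inter_union_distrib_left, measureReal_union _ (hC.inter (hmeas _)),
    hX.measureReal_cylSet_inter_up hs, hX.measureReal_cylSet_inter_down hs]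
  · field_simp; ring
  · exact Disjoint.mono Set.inter_subset_right Set.inter_subset_right
      (Set.disjoint_left.mpr fun ω (h1 : X (j + 1) ω = _) (h2 : X (j + 1) ω = _) => by omega)

theorem ae_restrict_cylSet_step (hX : IsHProcess P X a) (hs : 0 ≤ s j) :
    ∀ᵐ ω ∂P.restrict (cylSet X j s), 1 ≤ X (j + 1) ω ∧ X (j + 1) ω ≤ s j + 1 := by
  have hC := measurableSet_cylSet hX.meas j s
  have hmeas (b : ℤ) : MeasurableSet {ω | X (j + 1) ω = b} :=
    hX.meas _ (measurableSet_singleton b)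
  obtain ⟨E, hEm, hE, hgood⟩ : ∃ E, MeasurableSet E ∧
      (cylSet X j s ∩ E : Set Ω) =ᵐ[P] cylSet X j s ∧
      ∀ ω ∈ E, 1 ≤ X (j + 1) ω ∧ X (j + 1) ω ≤ s j + 1 := by
    rcases (by omega : s j = 0 ∨ s j = 1 ∨ 2 ≤ s j) with h0 | h1 | h2
    · exact ⟨_, hmeas 1, inter_ae_eq_left_of_measureReal_eq (hC.inter (hmeas 1))
        (hX.measureReal_cylSet_inter_zero h0), fun ω (hω : X (j + 1) ω = 1) => by omega⟩
    · refine ⟨_, hmeas _, inter_ae_eq_left_of_measureReal_eq (hC.inter (hmeas _)) ?_,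
        fun ω (hω : X (j + 1) ω = s j + 1) => by omega⟩
      rw [hX.measureReal_cylSet_inter_up h1.ge, h1]
      norm_num
    · exact ⟨_, (hmeas _).union (hmeas _), hX.cylSet_inter_up_union_down_ae_eq (by omega),
        fun ω (hω : X (j + 1) ω = s j + 1 ∨ X (j + 1) ω = s j - 1) => by omega⟩
  rw [← Measure.restrict_congr_set hE]
  filter_upwards [ae_restrict_mem (hC.inter hEm)] with ω hω using hgood ω hω.2

theorem ae_step (hX : IsHProcess P X a) (m : ℕ) (h : ∀ᵐ ω ∂P, 0 ≤ X m ω) :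
    ∀ᵐ ω ∂P, 1 ≤ X (m + 1) ω ∧ X (m + 1) ω ≤ X m ω + 1 := by
  have hA : MeasurableSet {ω | 0 ≤ X m ω} := hX.meas m measurableSet_Ici
  have := ae_restrict_of_forall_ae_restrict_cylSet hX.meas hA
    (Q := fun ω => 1 ≤ X (m + 1) ω ∧ X (m + 1) ω ≤ X m ω + 1)
    (fun ω (hω : 0 ≤ X m ω) ω' hω' => show 0 ≤ X m ω' by rwa [hω' m le_rfl])
    fun ω (hω : 0 ≤ X m ω) => by
      filter_upwards [hX.ae_restrict_cylSet_step (s := (X · ω)) hω,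
        ae_restrict_mem (measurableSet_cylSet hX.meas m _)] with ω' h1 h2
      rwa [h2 m le_rfl]
  filter_upwards [h, (ae_restrict_iff' hA).mp this] with ω h1 h2 using h2 h1

theorem ae_path (hX : IsHProcess P X a) (ha : 0 ≤ a) :
    ∀ᵐ ω ∂P, X 0 ω = a ∧ ∀ m, 1 ≤ X (m + 1) ω ∧ X (m + 1) ω ≤ X m ω + 1 := by
  have hnonneg : ∀ m, ∀ᵐ ω ∂P, 0 ≤ X m ω := by
    intro m
    induction m with
    | zero => filter_upwards [hX.start] with ω hω using hω ▸ ha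
    | succ m ih => filter_upwards [hX.ae_step m ih] with ω hω using by omega
  filter_upwards [hX.start, ae_all_iff.mpr fun m => hX.ae_step m (hnonneg m)] with ω h0 hstep
    using ⟨h0, hstep⟩

theorem ae_nonneg_le (hX : IsHProcess P X a) (ha : 0 ≤ a) :
    ∀ᵐ ω ∂P, ∀ j, 0 ≤ X j ω ∧ X j ω ≤ a + j := by
  filter_upwards [hX.ae_path ha] with ω ⟨h0, hstep⟩ j
  refine ⟨?_, h0 ▸ le_add_of_step_le (fun m => (hstep m).2) j⟩
  cases j with
  | zero => omega
  | succ j => linarith [(hstep j).1]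

theorem setIntegral_cylSet_inv_le (hX : IsHProcess P X a) (d : ℕ) (hs : 1 ≤ s j) :
    ∫ ω in cylSet X j s, (X (j + d) ω : ℝ)⁻¹ ∂P ≤ P.real (cylSet X j s) / s j := by
  induction d generalizing j s with
  | zero =>
    rw [Nat.add_zero, setIntegral_congr_fun (measurableSet_cylSet hX.meas j s)
      fun ω hω => by rw [hω j le_rfl], setIntegral_const, smul_eq_mul, div_eq_mul_inv]
  | succ d ih =>
    have hC := measurableSet_cylSet hX.meas j s
    have hmeas (b : ℤ) : MeasurableSet {ω | X (j + 1) ω = b} :=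
      hX.meas _ (measurableSet_singleton b)
    have hs' : (1 : ℝ) ≤ s j := by exact_mod_cast hs
    have hint {A : Set Ω} : IntegrableOn (fun ω => (X (j + (d + 1)) ω : ℝ)⁻¹) A P :=
      (integrable_inv_intCast (hX.meas _)).integrableOn
    have hup : ∫ ω in cylSet X j s ∩ {ω | X (j + 1) ω = s j + 1}, (X (j + (d + 1)) ω : ℝ)⁻¹ ∂P
        ≤ P.real (cylSet X j s) / (2 * s j) := by
      have := ih (j := j + 1) (s := Function.update s (j + 1) (s j + 1)) (by simp; omega)
      rw [cylSet_succ, Function.update_self, hX.measureReal_cylSet_inter_up hs,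
        ← add_right_comm, add_assoc] at this
      refine this.trans_eq ?_
      push_cast
      field_simp
    have hdown : ∫ ω in cylSet X j s ∩ {ω | X (j + 1) ω = s j - 1},
        (X (j + (d + 1)) ω : ℝ)⁻¹ ∂P ≤ P.real (cylSet X j s) / (2 * s j) := by
      rcases eq_or_lt_of_le hs with h1 | h2
      · have hnull : P (cylSet X j s ∩ {ω | X (j + 1) ω = s j - 1}) = 0 := by
          rw [← measureReal_eq_zero_iff, hX.measureReal_cylSet_inter_down hs, ← h1]
          simp
        rw [setIntegral_measure_zero _ hnull]
        positivity
      have := ih (j := j + 1) (s := Function.update s (j + 1) (s j - 1)) (by simp; omega)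
      rw [cylSet_succ, Function.update_self, hX.measureReal_cylSet_inter_down hs,
        ← add_right_comm, add_assoc] at this
      refine this.trans_eq ?_
      have : (s j : ℝ) - 1 ≠ 0 := sub_ne_zero.mpr (by exact_mod_cast h2.ne')
      push_cast
      field_simp
    rw [← setIntegral_congr_set (hX.cylSet_inter_up_union_down_ae_eq hs),
      Set.inter_union_distrib_left, setIntegral_union _ (hC.inter (hmeas _)) hint hint]
    · refine (add_le_add hup hdown).trans_eq ?_
      field_simp
      ring
    · exact Disjoint.mono Set.inter_subset_right Set.inter_subset_right
        (Set.disjoint_left.mpr fun ω (h1 : X (j + 1) ω = _) (h2 : X (j + 1) ω = _) => by omega)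

theorem measureReal_cylSet_inter_lt_le (hX : IsHProcess P X a) {n : ℕ} (hjn : j ≤ n)
    (hs : 1 ≤ s j) {k : ℤ} (hk : 1 ≤ k) (hpos : ∀ᵐ ω ∂P, 1 ≤ X n ω) :
    P.real (cylSet X j s ∩ {ω | X n ω < k}) ≤ (k - 1) / s j * P.real (cylSet X j s) := by
  obtain ⟨d, rfl⟩ := Nat.exists_eq_add_of_le hjn
  have hL : MeasurableSet {ω | X (j + d) ω < k} := hX.meas _ measurableSet_Iio
  have hk' : (0 : ℝ) ≤ k - 1 := by
    have : (1 : ℝ) ≤ k := by exact_mod_cast hk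
    linarith
  calc P.real (cylSet X j s ∩ {ω | X (j + d) ω < k})
      = ∫ ω in cylSet X j s, {ω | X (j + d) ω < k}.indicator 1 ω ∂P := by
        rw [Set.inter_comm, ← measureReal_restrict_apply hL, integral_indicator_one hL]
    _ ≤ ∫ ω in cylSet X j s, (k - 1) * (X (j + d) ω : ℝ)⁻¹ ∂P := by
        refine integral_mono_ae ((integrable_const 1).indicator hL)
          ((integrable_inv_intCast (hX.meas _)).const_mul _)
          (ae_restrict_of_ae (hpos.mono fun ω hω => ?_))
        simpa only [Set.indicator_apply, Set.mem_ofPred_eq, Pi.one_apply] using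
          ite_lt_le_mul_inv hω hk
    _ ≤ (k - 1) * (P.real (cylSet X j s) / s j) := by
        rw [integral_const_mul]
        exact mul_le_mul_of_nonneg_left (hX.setIntegral_cylSet_inv_le d hs) hk'
    _ = (k - 1) / s j * P.real (cylSet X j s) := by ring

theorem measure_firstHit_inter_lt_le (hX : IsHProcess P X a) {n : ℕ} (hjn : j ≤ n) {k : ℤ}
    (hk : 1 ≤ k) (hpos : ∀ᵐ ω ∂P, 1 ≤ X n ω) :
    P (firstHit X (2 * k) j ∩ {ω | X n ω < k}) ≤ 2⁻¹ * P (firstHit X (2 * k) j) := by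
  have hL : MeasurableSet {ω | X n ω < k} := hX.meas _ measurableSet_Iio
  have key := measure_le_of_cylSet_le hX.meas (μ := P.restrict {ω | X n ω < k})
    (ν := (2⁻¹ : ENNReal) • P) (A := firstHit X (2 * k) j) (fun ω hω ω' hω' =>
      ⟨(hω' j le_rfl).trans hω.1, fun i hi => (hω' i hi.le).trans_lt (hω.2 i hi)⟩)
      fun ω hω => ?_
  · rwa [Measure.restrict_apply (measurableSet_firstHit hX.meas _ _), Measure.smul_apply,
      smul_eq_mul] at key
  rw [Measure.restrict_apply (measurableSet_cylSet hX.meas _ _), Measure.smul_apply, smul_eq_mul]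
  have hsj : X j ω = 2 * k := hω.1
  have h := hX.measureReal_cylSet_inter_lt_le (s := (X · ω)) hjn (by omega) hk hpos
  rw [hsj] at h
  have hk' : (1 : ℝ) ≤ k := by exact_mod_cast hk
  have hhalf : P.real (cylSet X j (X · ω) ∩ {ω | X n ω < k})
      ≤ 2⁻¹ * P.real (cylSet X j (X · ω)) :=
    h.trans (mul_le_mul_of_nonneg_right
      (by rw [div_le_iff₀ (by push_cast; linarith)]; push_cast; linarith) measureReal_nonneg)
  rw [← ENNReal.toReal_le_toReal (by finiteness) (by finiteness)]
  rwa [ENNReal.toReal_mul, ENNReal.toReal_inv, ENNReal.toReal_ofNat]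

theorem measureReal_exists_ge_two_mul_le (hX : IsHProcess P X a) (ha : 0 ≤ a) {k : ℤ}
    (hak : a < 2 * k) (n : ℕ) :
    P.real {ω | ∃ j ∈ Icc 1 n, 2 * k ≤ X j ω} ≤ 2 * P.real {ω | k ≤ X n ω} := by
  set M := {ω | ∃ j ∈ Icc 1 n, 2 * k ≤ X j ω}
  set L := {ω | X n ω < k}
  have hL : MeasurableSet L := hX.meas n measurableSet_Iio
  have hpath := hX.ae_path ha
  have hcover : (M ∩ L : Set Ω) ≤ᵐ[P] ⋃ j ∈ Icc 1 n, firstHit X (2 * k) j ∩ L := by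
    filter_upwards [hpath] with ω ⟨h0, hstep⟩ ⟨⟨j, hj, hjk⟩, hωL⟩
    obtain ⟨i, hij, hi, hmin⟩ := exists_first_eq_of_step_le (fun m => (hstep m).2) (h0 ▸ hak) hjk
    have hi0 : i ≠ 0 := by rintro rfl; omega
    rw [mem_Icc] at hj
    exact Set.mem_biUnion (mem_Icc.mpr ⟨by omega, by omega⟩) ⟨⟨hi, hmin⟩, hωL⟩
  have hdisj : Set.PairwiseDisjoint (Icc 1 n : Set ℕ) (firstHit X (2 * k)) := by
    intro j _ j' _ hne
    refine Set.disjoint_left.mpr fun ω h h' => ?_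
    rcases hne.lt_or_gt with hlt | hlt
    · exact (h'.2 j hlt).ne h.1
    · exact (h.2 j' hlt).ne h'.1
  have hpos {j : ℕ} (hj : j ∈ Icc 1 n) : ∀ᵐ ω ∂P, 1 ≤ X n ω := by
    obtain ⟨m, rfl⟩ := Nat.exists_eq_add_of_le' ((mem_Icc.mp hj).1.trans (mem_Icc.mp hj).2)
    filter_upwards [hpath] with ω h using (h.2 m).1
  have hhalf : P (M ∩ L) ≤ 2⁻¹ * P M := calc
    P (M ∩ L) ≤ P (⋃ j ∈ Icc 1 n, firstHit X (2 * k) j ∩ L) := measure_mono_ae hcover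
    _ ≤ ∑ j ∈ Icc 1 n, P (firstHit X (2 * k) j ∩ L) := measure_biUnion_finset_le _ _
    _ ≤ ∑ j ∈ Icc 1 n, 2⁻¹ * P (firstHit X (2 * k) j) := sum_le_sum fun j hj =>
        hX.measure_firstHit_inter_lt_le (mem_Icc.mp hj).2 (by omega) (hpos hj)
    _ = 2⁻¹ * P (⋃ j ∈ Icc 1 n, firstHit X (2 * k) j) := by
        rw [← mul_sum, measure_biUnion_finset hdisj fun j _ => measurableSet_firstHit hX.meas _ j]
    _ ≤ 2⁻¹ * P M := by
        gcongr
        exact Set.iUnion₂_subset fun j hj ω hω => ⟨j, hj, hω.1.ge⟩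
  have hreal : P.real (M ∩ L) ≤ 2⁻¹ * P.real M := by
    have := ENNReal.toReal_mono (by finiteness) hhalf
    rwa [ENNReal.toReal_mul, ENNReal.toReal_inv, ENNReal.toReal_ofNat] at this
  have hsplit := measureReal_inter_add_sdiff (μ := P) (s := M) hL
  have hdiff : P.real (M \ L) ≤ P.real {ω | k ≤ X n ω} :=
    measureReal_mono fun ω h => show k ≤ X n ω from not_lt.mp h.2
  linarith

end IsHProcess

/-- For the walk conditioned to stay positive started at `0`, with
`Z_n = max{X_1, …, X_n}`: `E[Z_n] ≤ 1 + 4 E[X_n]`. -/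
theorem h_process_max_expectation
    {Ω : Type*} [MeasurableSpace Ω] (P : Measure Ω) [IsProbabilityMeasure P]
    (X : ℕ → Ω → ℤ) (hX : IsHProcess P X 0) (n : ℕ) (hn : 1 ≤ n) :
    ∫ ω, (((Finset.Icc 1 n).sup' (Finset.nonempty_Icc.mpr hn)
        (fun j => X j ω) : ℤ) : ℝ) ∂P
      ≤ 1 + 4 * ∫ ω, (X n ω : ℝ) ∂P := by
  set Z : Ω → ℤ := fun ω => (Icc 1 n).sup' (nonempty_Icc.mpr hn) (X · ω)
  have hZm : Measurable Z := by
    simpa only [Z, ← Finset.sup'_apply] using measurable_sup' _ fun j _ => hX.meas j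
  have hbound := hX.ae_nonneg_le le_rfl
  have hnn : n ∈ Icc 1 n := mem_Icc.mpr ⟨hn, le_rfl⟩
  have hXn : ∀ᵐ ω ∂P, 0 ≤ X n ω ∧ X n ω ≤ n :=
    hbound.mono fun ω h => ⟨(h n).1, by linarith [(h n).2]⟩
  have hZ : ∀ᵐ ω ∂P, 0 ≤ Z ω ∧ Z ω ≤ (2 * n + 1 : ℕ) := hbound.mono fun ω h =>
    ⟨(h n).1.trans (le_sup' (X · ω) hnn),
      sup'_le _ _ fun j hj => by have := (h j).2; have := (mem_Icc.mp hj).2; omega⟩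
  have key (k m : ℕ) (hm : 2 * k + 1 ≤ m) :
      P.real {ω | (m : ℤ) < Z ω} ≤ 2 * P.real {ω | (k : ℤ) < X n ω} := calc
    _ ≤ P.real {ω | ∃ j ∈ Icc 1 n, 2 * ((k : ℤ) + 1) ≤ X j ω} := measureReal_mono fun ω hω => by
        obtain ⟨j, hj, hjm⟩ := (lt_sup'_iff _).mp (show (m : ℤ) < Z ω from hω)
        exact ⟨j, hj, by omega⟩
    _ ≤ 2 * P.real {ω | (k : ℤ) + 1 ≤ X n ω} :=
        hX.measureReal_exists_ge_two_mul_le le_rfl (by omega) n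
    _ = _ := by simp only [Int.add_one_le_iff]
  show ∫ ω, (Z ω : ℝ) ∂P ≤ _
  rw [integral_intCast_eq_sum_measureReal_lt hZm hZ,
    integral_intCast_eq_sum_measureReal_lt (hX.meas n) hXn]
  exact sum_range_two_mul_add_one_le measureReal_le_one (fun k => key k _ le_rfl)
    (fun k => key k _ (by omega)) n
end

section
/- Let X be the simple symmetric random walk conditioned to stay positive, started at 0, and Z_n = max{X_1,...,X_n}. There exists a constant C such that E[Z_n] ≤ C √n for all n ≥ 1. -/
open MeasureTheory ProbabilityTheory Finset

/-!
With `Z_n = max(X_0, …, X_n)`, the process `Z_n² - 2 Z_n X_n` is a supermartingale started at `0`: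
while `X_n < Z_n` the maximum stays put and `X` has drift `1 / X_n ≥ 0`, and from `X_n = Z_n` a
one-step computation suffices. Hence `E[Z_n²] ≤ 2 E[Z_n X_n] ≤ 2 √(E[Z_n²] E[X_n²])`, i.e.
`E[Z_n²] ≤ 4 E[X_n²]`. Since `E[X_{n+1}² | X_n = x] = x² + 3` for `x ≥ 1`, also `E[X_n²] ≤ 3n`,
so `E[Z_n] ≤ √(E[Z_n²]) ≤ √(12 n)`. The law of `(X_0, …, X_n)` is carried by finitely many
paths, whose probabilities are fixed by the transition rule, so all expectations are finite sums.
-/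

lemma partialSups_update_of_lt {α : Type*} [SemilatticeSup α] (s : ℕ → α) {n m : ℕ} (h : n < m)
    (v : α) : partialSups (Function.update s m v) n = partialSups s n := by
  simp only [partialSups_apply]
  exact sup'_congr _ rfl fun j hj => Function.update_of_ne (by rw [mem_Iic] at hj; omega) _ _

lemma sup'_Icc_one_eq_partialSups {α : Type*} [LinearOrder α] {s : ℕ → α} (hs : s 0 ≤ s 1)
    {n : ℕ} (hn : 1 ≤ n) : (Icc 1 n).sup' (nonempty_Icc.mpr hn) s = partialSups s n := by
  refine eq_of_forall_ge_iff fun c => ?_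
  simp only [sup'_le_iff, mem_Icc, partialSups_le_iff]
  refine ⟨fun h j hj => ?_, fun h j hj => h j hj.2⟩
  rcases j.eq_zero_or_pos with rfl | hj0
  · exact hs.trans (h 1 ⟨le_rfl, hn⟩)
  · exact h j ⟨hj0, hj⟩

namespace HProcess

def nextValues (x : ℤ) : Finset ℤ := if x = 0 then {1} else {x + 1, x - 1}

/-- Doob transform of the simple walk by `h(v) = v`: `p(x, v) = ½ · h(v) / h(x)` for `x ≥ 1`. -/
noncomputable def stepProb (x v : ℤ) : ℝ := if x = 0 then 1 else v / (2 * x)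

/-- `E[g(X_{n+1}) | X_n = x]`. -/
noncomputable def transMean (x : ℤ) (g : ℤ → ℝ) : ℝ :=
  ∑ v ∈ nextValues x, stepProb x v * g v

lemma transMean_zero (g : ℤ → ℝ) : transMean 0 g = g 1 := by
  simp [transMean, nextValues, stepProb]

lemma transMean_of_pos {x : ℤ} (hx : 0 < x) (g : ℤ → ℝ) :
    transMean x g = (x + 1) / (2 * x) * g (x + 1) + (x - 1) / (2 * x) * g (x - 1) := by
  rw [transMean, nextValues, if_neg hx.ne', sum_pair (by omega)]
  simp [stepProb, hx.ne']

lemma nonneg_of_mem_nextValues {x v : ℤ} (hx : 0 ≤ x) (hv : v ∈ nextValues x) : 0 ≤ v := by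
  unfold nextValues at hv
  split_ifs at hv <;> simp only [mem_insert, mem_singleton] at hv <;> omega

lemma transMean_const {x : ℤ} (hx : 0 ≤ x) (c : ℝ) : transMean x (fun _ => c) = c := by
  rcases hx.eq_or_lt with rfl | hx
  · exact transMean_zero _
  · have : (x : ℝ) ≠ 0 := by positivity
    rw [transMean_of_pos hx]
    field_simp
    ring

lemma transMean_sq_le {x : ℤ} (hx : 0 ≤ x) : transMean x (fun v => (v : ℝ) ^ 2) ≤ x ^ 2 + 3 := by
  rcases hx.eq_or_lt with rfl | hx
  · norm_num [transMean_zero]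
  · have : (x : ℝ) ≠ 0 := by positivity
    rw [transMean_of_pos hx]
    apply le_of_eq
    push_cast
    field_simp
    ring

lemma transMean_potential_le {x z : ℤ} (hx : 0 ≤ x) (hxz : x ≤ z) :
    transMean x (fun v => ((max z v : ℤ) : ℝ) ^ 2 - 2 * (max z v : ℤ) * v) ≤ z ^ 2 - 2 * z * x := by
  rcases hx.eq_or_lt with rfl | hx
  · rw [transMean_zero]
    rcases hxz.eq_or_lt with rfl | hz
    · norm_num
    · have hz' : (0 : ℝ) < z := by exact_mod_cast hz
      rw [max_eq_left (by omega)]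
      push_cast
      linarith
  · have hx' : (0 : ℝ) < x := by exact_mod_cast hx
    rw [transMean_of_pos hx, ← sub_nonneg]
    rcases hxz.eq_or_lt with rfl | hz
    · rw [max_eq_right (by omega), max_eq_left (by omega)]
      push_cast
      field_simp
      ring_nf
      linarith
    · have hz' : (x : ℝ) < z := by exact_mod_cast hz
      rw [max_eq_left (by omega), max_eq_left (by omega)]
      push_cast
      field_simp
      ring_nf
      linarith

open Classical in
/-- The paths `s 0, …, s n` the walk from `0` can follow, extended by `0` after time `n`. -/
noncomputable def admissiblePaths : ℕ → Finset (ℕ → ℤ)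
  | 0 => {0}
  | n + 1 => (admissiblePaths n).biUnion fun s =>
      (nextValues (s n)).image (Function.update s (n + 1))

lemma mem_admissiblePaths_succ {n : ℕ} {t : ℕ → ℤ} :
    t ∈ admissiblePaths (n + 1) ↔
      ∃ s ∈ admissiblePaths n, ∃ v ∈ nextValues (s n), Function.update s (n + 1) v = t := by
  simp [admissiblePaths]

lemma apply_zero_of_mem_admissiblePaths {n : ℕ} {s : ℕ → ℤ} (hs : s ∈ admissiblePaths n) :
    s 0 = 0 := by
  induction n generalizing s with
  | zero => simp_all [admissiblePaths]
  | succ n ih =>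
    obtain ⟨s, hs', v, -, rfl⟩ := mem_admissiblePaths_succ.mp hs
    rw [Function.update_of_ne (by omega), ih hs']

lemma apply_eq_zero_of_mem_admissiblePaths {n i : ℕ} {s : ℕ → ℤ} (hs : s ∈ admissiblePaths n)
    (hi : n < i) : s i = 0 := by
  induction n generalizing s with
  | zero => simp_all [admissiblePaths]
  | succ n ih =>
    obtain ⟨s, hs', v, -, rfl⟩ := mem_admissiblePaths_succ.mp hs
    rw [Function.update_of_ne (by omega), ih hs' (by omega)]

lemma apply_nonneg_of_mem_admissiblePaths {n : ℕ} {s : ℕ → ℤ} (hs : s ∈ admissiblePaths n)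
    (i : ℕ) : 0 ≤ s i := by
  induction n generalizing s i with
  | zero => simp_all [admissiblePaths]
  | succ n ih =>
    obtain ⟨s, hs', v, hv, rfl⟩ := mem_admissiblePaths_succ.mp hs
    rcases eq_or_ne i (n + 1) with rfl | hi
    · rw [Function.update_self]
      exact nonneg_of_mem_nextValues (ih hs' n) hv
    · rw [Function.update_of_ne hi]
      exact ih hs' i

lemma eq_of_mem_admissiblePaths {n : ℕ} {s t : ℕ → ℤ} (hs : s ∈ admissiblePaths n)
    (ht : t ∈ admissiblePaths n) (h : ∀ i ≤ n, s i = t i) : s = t := by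
  funext i
  rcases le_or_gt i n with hi | hi
  · exact h i hi
  · rw [apply_eq_zero_of_mem_admissiblePaths hs hi, apply_eq_zero_of_mem_admissiblePaths ht hi]

section Cylinders

variable {Ω : Type*} {X : ℕ → Ω → ℤ}

def cylinder (X : ℕ → Ω → ℤ) (n : ℕ) (s : ℕ → ℤ) : Set Ω := {ω | ∀ i, i ≤ n → X i ω = s i}

lemma measurableSet_cylinder [MeasurableSpace Ω] (hX : ∀ n, Measurable (X n)) (n : ℕ) (s : ℕ → ℤ) :
    MeasurableSet (cylinder X n s) := by
  simp only [cylinder, Set.ofPred_forall]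
  exact .iInter fun i => .iInter fun _ => measurableSet_eq_fun (hX i) measurable_const

lemma cylinder_update (n : ℕ) (s : ℕ → ℤ) (v : ℤ) :
    cylinder X (n + 1) (Function.update s (n + 1) v)
      = {ω | X (n + 1) ω = v ∧ ∀ i, i ≤ n → X i ω = s i} := by
  ext ω
  simp only [cylinder, Set.mem_ofPred_eq, Nat.le_succ_iff_eq_or_le, or_imp, forall_and,
    forall_eq, Function.update_self]
  refine and_congr_right fun _ => forall₂_congr fun i hi => ?_
  rw [Function.update_of_ne (by omega)]

lemma pairwiseDisjoint_cylinder (n : ℕ) :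
    (admissiblePaths n : Set (ℕ → ℤ)).PairwiseDisjoint (cylinder X n) := by
  intro s hs t ht hst
  refine Set.disjoint_left.mpr fun ω hωs hωt => hst ?_
  exact eq_of_mem_admissiblePaths hs ht fun i hi => (hωs i hi).symm.trans (hωt i hi)

end Cylinders

section PathExpect

variable {Ω : Type*} [MeasurableSpace Ω] {P : Measure Ω} {X : ℕ → Ω → ℤ} {n : ℕ}

/-- `E[f (X_0, …, X_n)]`, as a finite sum over paths. -/
noncomputable def pathExpect (P : Measure Ω) (X : ℕ → Ω → ℤ) (n : ℕ) (f : (ℕ → ℤ) → ℝ) : ℝ :=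
  ∑ s ∈ admissiblePaths n, f s * P.real (cylinder X n s)

lemma pathExpect_add (f g : (ℕ → ℤ) → ℝ) :
    pathExpect P X n (fun s => f s + g s) = pathExpect P X n f + pathExpect P X n g := by
  simp only [pathExpect, add_mul, sum_add_distrib]

lemma pathExpect_sub (f g : (ℕ → ℤ) → ℝ) :
    pathExpect P X n (fun s => f s - g s) = pathExpect P X n f - pathExpect P X n g := by
  simp only [pathExpect, sub_mul, sum_sub_distrib]

lemma pathExpect_const_mul (c : ℝ) (f : (ℕ → ℤ) → ℝ) :
    pathExpect P X n (fun s => c * f s) = c * pathExpect P X n f := by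
  simp only [pathExpect, mul_sum, mul_assoc]

lemma pathExpect_mono {f g : (ℕ → ℤ) → ℝ} (h : ∀ s ∈ admissiblePaths n, f s ≤ g s) :
    pathExpect P X n f ≤ pathExpect P X n g :=
  sum_le_sum fun s hs => mul_le_mul_of_nonneg_right (h s hs) measureReal_nonneg

lemma sq_pathExpect_mul_le (f g : (ℕ → ℤ) → ℝ) :
    pathExpect P X n (fun s => f s * g s) ^ 2
      ≤ pathExpect P X n (fun s => f s ^ 2) * pathExpect P X n (fun s => g s ^ 2) :=
  sum_sq_le_sum_mul_sum_of_sq_le_mul _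
    (fun _ _ => mul_nonneg (sq_nonneg _) measureReal_nonneg)
    (fun _ _ => mul_nonneg (sq_nonneg _) measureReal_nonneg)
    (fun _ _ => le_of_eq (by ring))

lemma pathExpect_congr {f g : (ℕ → ℤ) → ℝ} (h : ∀ s ∈ admissiblePaths n, f s = g s) :
    pathExpect P X n f = pathExpect P X n g :=
  sum_congr rfl fun s hs => by rw [h s hs]

end PathExpect

end HProcess

namespace IsHProcess

open HProcess

variable {Ω : Type*} [MeasurableSpace Ω] {P : Measure Ω} {X : ℕ → Ω → ℤ} {n : ℕ}

lemma measureReal_cylinder_update {a : ℤ} (hX : IsHProcess P X a) {s : ℕ → ℤ} (hs : 0 ≤ s n)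
    {v : ℤ} (hv : v ∈ nextValues (s n)) :
    P.real (cylinder X (n + 1) (Function.update s (n + 1) v))
      = stepProb (s n) v * P.real (cylinder X n s) := by
  rw [cylinder_update]
  unfold nextValues at hv
  split_ifs at hv with h0
  · rw [mem_singleton.mp hv, measureReal_def, hX.step_zero n s h0, stepProb, if_pos h0, one_mul]
    rfl
  · have h1 : 1 ≤ s n := by omega
    have hstep : 0 ≤ (v : ℝ) / (2 * s n) := by
      have := nonneg_of_mem_nextValues hs (by rw [nextValues, if_neg h0]; exact hv)
      positivity
    rw [stepProb, if_neg h0, measureReal_def, measureReal_def, ← ENNReal.toReal_ofReal hstep,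
      ← ENNReal.toReal_mul]
    congr 1
    rcases mem_insert.mp hv with rfl | hv
    · rw [hX.step_up n s h1]; push_cast; rfl
    · rw [mem_singleton.mp hv, hX.step_down n s h1]; push_cast; rfl

lemma pathExpect_succ {a : ℤ} (hX : IsHProcess P X a) (f : (ℕ → ℤ) → ℝ) :
    pathExpect P X (n + 1) f
      = pathExpect P X n (fun s => transMean (s n) (fun v => f (Function.update s (n + 1) v))) := by
  classical
  rw [pathExpect, admissiblePaths, sum_biUnion]
  · refine sum_congr rfl fun s hs => ?_
    rw [sum_image fun _ _ _ _ h => Function.update_injective s (n + 1) h]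
    unfold transMean
    rw [sum_mul]
    refine sum_congr rfl fun v hv => ?_
    rw [hX.measureReal_cylinder_update (apply_nonneg_of_mem_admissiblePaths hs n) hv]
    ring
  · intro s hs t ht hst
    refine disjoint_left.mpr fun u hus hut => hst ?_
    obtain ⟨v, -, rfl⟩ := mem_image.mp hus
    obtain ⟨w, -, hw⟩ := mem_image.mp hut
    refine eq_of_mem_admissiblePaths hs ht fun i hi => ?_
    simpa [Function.update_of_ne (show i ≠ n + 1 by omega)] using congrFun hw.symm i

variable [IsProbabilityMeasure P]

lemma pathExpect_zero (hX : IsHProcess P X 0) (f : (ℕ → ℤ) → ℝ) :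
    pathExpect P X 0 f = f 0 := by
  have hcyl : ∀ᵐ ω ∂P, ω ∈ cylinder X 0 0 :=
    hX.start.mono fun ω h i hi => by rw [Nat.le_zero.mp hi]; exact h
  have hP : P (cylinder X 0 0) = 1 :=
    (mem_ae_iff_prob_eq_one (measurableSet_cylinder hX.meas 0 0)).mp hcyl
  simp [pathExpect, admissiblePaths, measureReal_def, hP]

lemma pathExpect_const (hX : IsHProcess P X 0) (c : ℝ) :
    pathExpect P X n (fun _ => c) = c := by
  induction n with
  | zero => exact hX.pathExpect_zero _
  | succ n ih =>
    rw [hX.pathExpect_succ]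
    exact (pathExpect_congr fun s hs =>
      transMean_const (apply_nonneg_of_mem_admissiblePaths hs n) c).trans ih

lemma pathExpect_le_of_drift_le (hX : IsHProcess P X 0)
    (f : ℕ → (ℕ → ℤ) → ℝ) (c : ℝ)
    (hf : ∀ n, ∀ s ∈ admissiblePaths n,
      transMean (s n) (fun v => f (n + 1) (Function.update s (n + 1) v)) ≤ f n s + c) :
    pathExpect P X n (f n) ≤ f 0 0 + c * n := by
  induction n with
  | zero => simp [hX.pathExpect_zero]
  | succ n ih =>
    calc pathExpect P X (n + 1) (f (n + 1))
        ≤ pathExpect P X n (fun s => f n s + c) := by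
          rw [hX.pathExpect_succ]
          exact pathExpect_mono (hf n)
      _ = pathExpect P X n (f n) + c := by rw [pathExpect_add, hX.pathExpect_const]
      _ ≤ f 0 0 + c * (n + 1 : ℕ) := by push_cast; linarith

lemma integral_eq_pathExpect (hX : IsHProcess P X 0) (F : Ω → ℝ)
    (f : (ℕ → ℤ) → ℝ) (hF : ∀ s ∈ admissiblePaths n, ∀ ω ∈ cylinder X n s, F ω = f s) :
    ∫ ω, F ω ∂P = pathExpect P X n f := by
  have hmeas : ∀ s ∈ admissiblePaths n, MeasurableSet (cylinder X n s) :=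
    fun s _ => measurableSet_cylinder hX.meas n s
  have hcover : ∀ᵐ ω ∂P, ω ∈ ⋃ s ∈ admissiblePaths n, cylinder X n s := by
    refine (mem_ae_iff_prob_eq_one ((admissiblePaths n).measurableSet_biUnion hmeas)).mpr ?_
    rw [← ENNReal.toReal_eq_one_iff, ← measureReal_def,
      measureReal_biUnion_finset (pairwiseDisjoint_cylinder n) hmeas]
    simpa [pathExpect] using hX.pathExpect_const (n := n) 1
  nth_rw 1 [← Measure.restrict_eq_self_of_ae_mem hcover]
  rw [integral_biUnion_finset _ hmeas (pairwiseDisjoint_cylinder n) fun s hs =>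
      IntegrableOn.congr_fun integrableOn_const (fun ω hω => (hF s hs ω hω).symm) (hmeas s hs)]
  refine sum_congr rfl fun s hs => ?_
  rw [setIntegral_congr_fun (hmeas s hs) (hF s hs), setIntegral_const, smul_eq_mul, mul_comm]

lemma sq_pathExpect_le (hX : IsHProcess P X 0) (f : (ℕ → ℤ) → ℝ) :
    pathExpect P X n f ^ 2 ≤ pathExpect P X n (fun s => f s ^ 2) := by
  simpa [hX.pathExpect_const] using sq_pathExpect_mul_le (P := P) (X := X) (n := n) f 1

lemma pathExpect_sq_le (hX : IsHProcess P X 0) :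
    pathExpect P X n (fun s => (s n : ℝ) ^ 2) ≤ 3 * n := by
  refine (hX.pathExpect_le_of_drift_le (fun n s => (s n : ℝ) ^ 2) 3 fun n s hs => ?_).trans_eq ?_
  · simpa using transMean_sq_le (apply_nonneg_of_mem_admissiblePaths hs n)
  · simp

lemma pathExpect_partialSups_sq_le (hX : IsHProcess P X 0) :
    pathExpect P X n (fun s => (partialSups s n : ℝ) ^ 2)
      ≤ 2 * pathExpect P X n (fun s => (partialSups s n : ℝ) * s n) := by
  have hdrift := hX.pathExpect_le_of_drift_le (n := n)
    (fun n s => (partialSups s n : ℝ) ^ 2 - 2 * (partialSups s n : ℝ) * s n) 0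
    (fun n s hs => by
      simpa [partialSups_update_of_lt s n.lt_succ_self] using transMean_potential_le
        (apply_nonneg_of_mem_admissiblePaths hs n) (le_partialSups s n))
  simp only [pathExpect_sub, mul_assoc, pathExpect_const_mul] at hdrift
  simpa [sub_nonpos] using hdrift

lemma integral_sup'_Icc_eq (hX : IsHProcess P X 0) (hn : 1 ≤ n) :
    ∫ ω, (((Icc 1 n).sup' (nonempty_Icc.mpr hn) (fun j => X j ω) : ℤ) : ℝ) ∂P
      = pathExpect P X n (fun s => (partialSups s n : ℝ)) := by
  refine hX.integral_eq_pathExpect _ _ fun s hs ω hω => ?_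
  have hs01 : s 0 ≤ s 1 := by
    rw [apply_zero_of_mem_admissiblePaths hs]
    exact apply_nonneg_of_mem_admissiblePaths hs 1
  rw [← sup'_Icc_one_eq_partialSups hs01 hn]
  exact congrArg _ (sup'_congr _ rfl fun j hj => hω j (mem_Icc.mp hj).2)

end IsHProcess

/-- For the walk conditioned to stay positive started at `0`, with
`Z_n = max{X_1, …, X_n}`: there is a constant `C` with `E[Z_n] ≤ C √n` for all `n ≥ 1`. -/
theorem h_process_max_diffusive
    {Ω : Type*} [MeasurableSpace Ω] (P : Measure Ω) [IsProbabilityMeasure P]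
    (X : ℕ → Ω → ℤ) (hX : IsHProcess P X 0) :
    ∃ C : ℝ, ∀ n : ℕ, ∀ hn : 1 ≤ n,
      ∫ ω, (((Finset.Icc 1 n).sup' (Finset.nonempty_Icc.mpr hn)
          (fun j => X j ω) : ℤ) : ℝ) ∂P
        ≤ C * Real.sqrt n := by
  refine ⟨√12, fun n hn => ?_⟩
  set E := HProcess.pathExpect P X n
  set Z : (ℕ → ℤ) → ℝ := fun s => (partialSups s n : ℤ)
  have hmean : E Z ^ 2 ≤ E (fun s => Z s ^ 2) := hX.sq_pathExpect_le Z
  have hZZ : E (fun s => Z s ^ 2) ≤ 2 * E (fun s => Z s * s n) :=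
    hX.pathExpect_partialSups_sq_le
  have hZY : E (fun s => Z s * s n) ^ 2 ≤ E (fun s => Z s ^ 2) * E (fun s => (s n : ℝ) ^ 2) :=
    HProcess.sq_pathExpect_mul_le _ _
  have hYY : E (fun s => (s n : ℝ) ^ 2) ≤ 3 * n := hX.pathExpect_sq_le
  have hZ2 : E (fun s => Z s ^ 2) ≤ 12 * n := by nlinarith
  rw [hX.integral_sup'_Icc_eq hn, ← Real.sqrt_mul (by norm_num)]
  exact Real.le_sqrt_of_sq_le (by linarith)
end

section
/- For independent random variables with values in [0,∞), if nonnegative random functions (S_i, L_i, R_i)_{i=1..n} defined on independent probability spaces satisfy sup_ℓ Σ_m E[e^{α S_i(m)} 1_{L_i(m)=ℓ}] ≤ M for each i, then Σ_{m_0 ≥ 0} E[ Σ_{m_1,...,m_n ≥ 0} Π_{i=1}^n e^{α S_i(m_i)} 1_{L_i(m_i) = m_{i-1} − R_{i-2}(m_{i-2})} ] ≤ r·M^n, where the number of possible values of m_0 is at most r. -/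
open MeasureTheory ProbabilityTheory
open scoped ENNReal

/-- The sequence `m₀, m₁, …, mₙ` built from `m0` and the vector `mv = (m₁,…,mₙ)`. -/
def prevVal (n : ℕ) (m0 : ℕ) (mv : Fin n → ℕ) : ℕ → ℕ :=
  fun t => if t = 0 then m0 else if h : t - 1 < n then mv ⟨t - 1, h⟩ else 0

/-!
The constraint on block `i` only involves the choices and the randomness of the blocks `j < i`.
Hence the constraint on the first block is a constant `ℓ`, and once the first block's
randomness `x` and choice `m` are fixed, the remaining blocks form a system of the same kind.
Integrating those out first (Tonelli on `Ω₀ × ∏_{j ≥ 1} Ωⱼ`) bounds their contribution by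
`Mⁿ⁻¹`, uniformly in `m` and `x`; what is left is `∑_m E[f₀(m, ℓ)] ≤ M`. Induction gives `Mⁿ`
for each value of `m₀`, and there are at most `r` of them.
-/

theorem lintegral_pi_fin_succ {n : ℕ} {Ω : Fin (n + 1) → Type*} [∀ i, MeasurableSpace (Ω i)]
    (μ : ∀ i, Measure (Ω i)) [∀ i, SigmaFinite (μ i)] {F : (∀ i, Ω i) → ℝ≥0∞}
    (hF : Measurable F) :
    ∫⁻ ω, F ω ∂Measure.pi μ =
      ∫⁻ x, ∫⁻ p, F (Fin.cons x p) ∂Measure.pi (fun j => μ j.succ) ∂μ 0 := by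
  let e : Ω 0 × (∀ j : Fin n, Ω j.succ) ≃ᵐ ∀ j, Ω j := (MeasurableEquiv.piFinSuccAbove Ω 0).symm
  have he : MeasurePreserving e ((μ 0).prod (Measure.pi fun j => μ j.succ)) (Measure.pi μ) :=
    (measurePreserving_piFinSuccAbove μ 0).symm
  have he_apply : ∀ x p, e (x, p) = Fin.cons x p := fun x p => Fin.insertNth_zero x p
  rw [← he.lintegral_comp hF,
    lintegral_prod (fun z => F (e z)) (hF.comp e.measurable).aemeasurable]
  simp only [he_apply]

theorem ENNReal.tsum_pi_fin_succ {n : ℕ} {ι : Type*} (g : (Fin (n + 1) → ι) → ℝ≥0∞) :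
    ∑' mv, g mv = ∑' m, ∑' v, g (Fin.cons m v) := by
  rw [← (Fin.consEquiv fun _ => ι).tsum_eq, ENNReal.tsum_prod']
  rfl

section FinCons

variable {n : ℕ} {Ω : Fin (n + 1) → Type*} [∀ i, MeasurableSpace (Ω i)]

theorem measurable_fin_cons_left (p : ∀ j : Fin n, Ω j.succ) :
    Measurable fun x : Ω 0 => (Fin.cons x p : ∀ j, Ω j) :=
  measurable_pi_iff.2 <| Fin.cases measurable_id fun _ => measurable_const

theorem measurable_fin_cons_right (x : Ω 0) :
    Measurable fun p : ∀ j : Fin n, Ω j.succ => (Fin.cons x p : ∀ j, Ω j) :=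
  measurable_pi_iff.2 <| Fin.cases measurable_const measurable_pi_apply

end FinCons

section Decoupling

variable {ι β : Type*} {n : ℕ}

def DependsOnPast {Ω : Fin n → Type*} (c : Fin n → (Fin n → ι) → (∀ j, Ω j) → β) : Prop :=
  ∀ i mv mv' ω ω', (∀ j < i, mv j = mv' j) → (∀ j < i, ω j = ω' j) → c i mv ω = c i mv' ω'

/-- Block `i` picks `mv i : ι`; `c i mv ω` is the level its label is forced to hit, and
`f i (mv i) ℓ (ω i)` is its weight given that level. -/
noncomputable def constrainedMass {Ω : Fin n → Type*} (f : ∀ i, ι → β → Ω i → ℝ≥0∞)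
    (c : Fin n → (Fin n → ι) → (∀ j, Ω j) → β) (ω : ∀ j, Ω j) : ℝ≥0∞ :=
  ∑' mv : Fin n → ι, ∏ i, f i (mv i) (c i mv ω) (ω i)

theorem DependsOnPast.apply_zero {Ω : Fin (n + 1) → Type*}
    {c : Fin (n + 1) → (Fin (n + 1) → ι) → (∀ j, Ω j) → β} (hc : DependsOnPast c)
    (mv mv' : Fin (n + 1) → ι) (ω ω' : ∀ j, Ω j) : c 0 mv ω = c 0 mv' ω' :=
  hc 0 mv mv' ω ω' (fun j hj => absurd hj (Fin.not_lt_zero j))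
    (fun j hj => absurd hj (Fin.not_lt_zero j))

def shiftConstraint {Ω : Fin (n + 1) → Type*}
    (c : Fin (n + 1) → (Fin (n + 1) → ι) → (∀ j, Ω j) → β) (m : ι) (x : Ω 0) :
    Fin n → (Fin n → ι) → (∀ j : Fin n, Ω j.succ) → β :=
  fun i v p => c i.succ (Fin.cons m v) (Fin.cons x p)

theorem DependsOnPast.shift {Ω : Fin (n + 1) → Type*}
    {c : Fin (n + 1) → (Fin (n + 1) → ι) → (∀ j, Ω j) → β} (hc : DependsOnPast c)
    (m : ι) (x : Ω 0) : DependsOnPast (shiftConstraint c m x) := by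
  intro i v v' p p' hv hp
  refine hc i.succ _ _ _ _ (Fin.cases (fun _ => rfl) fun j hj => ?_)
    (Fin.cases (fun _ => rfl) fun j hj => ?_)
  · exact hv j (Fin.succ_lt_succ_iff.1 hj)
  · exact hp j (Fin.succ_lt_succ_iff.1 hj)

theorem constrainedMass_fin_cons {Ω : Fin (n + 1) → Type*} {f : ∀ i, ι → β → Ω i → ℝ≥0∞}
    {c : Fin (n + 1) → (Fin (n + 1) → ι) → (∀ j, Ω j) → β} {ℓ : β}
    (h0 : ∀ mv ω, c 0 mv ω = ℓ) (x : Ω 0) (p : ∀ j : Fin n, Ω j.succ) :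
    constrainedMass f c (Fin.cons x p) =
      ∑' m, f 0 m ℓ x * constrainedMass (fun i => f i.succ) (shiftConstraint c m x) p := by
  rw [constrainedMass, ENNReal.tsum_pi_fin_succ]
  refine tsum_congr fun m => ?_
  rw [constrainedMass, ← ENNReal.tsum_mul_left]
  refine tsum_congr fun v => ?_
  rw [Fin.prod_univ_succ, h0]
  rfl

theorem measurable_constrainedMass [Countable ι] {Ω : Fin n → Type*}
    [∀ i, MeasurableSpace (Ω i)] {f : ∀ i, ι → β → Ω i → ℝ≥0∞}
    {c : Fin n → (Fin n → ι) → (∀ j, Ω j) → β}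
    (hmeas : ∀ i mv, Measurable fun ω => f i (mv i) (c i mv ω) (ω i)) :
    Measurable (constrainedMass f c) :=
  .tsum fun mv => Finset.measurable_prod _ fun i _ => hmeas i mv

theorem measurable_shiftConstraint {Ω : Fin (n + 1) → Type*} [∀ i, MeasurableSpace (Ω i)]
    {f : ∀ i, ι → β → Ω i → ℝ≥0∞} {c : Fin (n + 1) → (Fin (n + 1) → ι) → (∀ j, Ω j) → β}
    (hmeas : ∀ i mv, Measurable fun ω => f i (mv i) (c i mv ω) (ω i)) (m : ι) (x : Ω 0)
    (i : Fin n) (v : Fin n → ι) :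
    Measurable fun p => f i.succ (v i) (shiftConstraint c m x i v p) (p i) :=
  (hmeas i.succ (Fin.cons m v)).comp (measurable_fin_cons_right x)

theorem lintegral_constrainedMass_le [Countable ι] {Ω : Fin n → Type*}
    [∀ i, MeasurableSpace (Ω i)] (μ : ∀ i, Measure (Ω i)) [∀ i, IsProbabilityMeasure (μ i)]
    {f : ∀ i, ι → β → Ω i → ℝ≥0∞} {c : Fin n → (Fin n → ι) → (∀ j, Ω j) → β} {M : ℝ≥0∞}
    (hc : DependsOnPast c) (hmeas : ∀ i mv, Measurable fun ω => f i (mv i) (c i mv ω) (ω i))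
    (hf : ∀ i ℓ, ∑' m, ∫⁻ x, f i m ℓ x ∂μ i ≤ M) :
    ∫⁻ ω, constrainedMass f c ω ∂Measure.pi μ ≤ M ^ n := by
  induction n with
  | zero => simp [constrainedMass]
  | succ n ih =>
    obtain ⟨ω₀⟩ := nonempty_of_isProbabilityMeasure (Measure.pi μ)
    rcases isEmpty_or_nonempty ι with hι | ⟨⟨m₀⟩⟩
    · simp [constrainedMass]
    set ℓ := c 0 (fun _ => m₀) ω₀
    have h0 : ∀ mv ω, c 0 mv ω = ℓ := fun mv ω => hc.apply_zero _ _ _ _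
    have hf0 (m : ι) : Measurable (f 0 m ℓ) := by
      simpa [h0, Function.comp_def] using
        (hmeas 0 fun _ => m).comp (measurable_fin_cons_left fun j => ω₀ j.succ)
    have htail (m : ι) (x : Ω 0) := ih (fun j => μ j.succ) (hc.shift m x)
      (measurable_shiftConstraint hmeas m x) fun i => hf i.succ
    have htail_meas (m : ι) (x : Ω 0) :=
      measurable_constrainedMass (measurable_shiftConstraint hmeas m x)
    calc ∫⁻ ω, constrainedMass f c ω ∂Measure.pi μ
        = ∫⁻ x, ∫⁻ p, ∑' m, f 0 m ℓ x * constrainedMass (fun i => f i.succ)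
            (shiftConstraint c m x) p ∂Measure.pi (fun j => μ j.succ) ∂μ 0 := by
          simp only [lintegral_pi_fin_succ μ (measurable_constrainedMass hmeas),
            constrainedMass_fin_cons h0]
      _ = ∫⁻ x, ∑' m, f 0 m ℓ x * ∫⁻ p, constrainedMass (fun i => f i.succ)
            (shiftConstraint c m x) p ∂Measure.pi (fun j => μ j.succ) ∂μ 0 := by
          refine lintegral_congr fun x => ?_
          rw [lintegral_tsum fun m => ((htail_meas m x).const_mul _).aemeasurable]
          exact tsum_congr fun m => lintegral_const_mul _ (htail_meas m x)
      _ ≤ ∫⁻ x, ∑' m, f 0 m ℓ x * M ^ n ∂μ 0 := by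
          gcongr with x m
          exact htail m x
      _ = (∑' m, ∫⁻ x, f 0 m ℓ x ∂μ 0) * M ^ n := by
          simp_rw [ENNReal.tsum_mul_right]
          rw [lintegral_mul_const _ (.tsum hf0), lintegral_tsum fun m => (hf0 m).aemeasurable]
      _ ≤ M ^ (n + 1) := by
          rw [pow_succ']
          gcongr
          exact hf 0 ℓ

end Decoupling

theorem prevVal_congr {n m0 t : ℕ} {mv mv' : Fin n → ℕ}
    (h : ∀ j : Fin n, (j : ℕ) < t → mv j = mv' j) : prevVal n m0 mv t = prevVal n m0 mv' t := by
  unfold prevVal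
  split_ifs with ht hlt
  · rfl
  · exact h _ (by simp only; omega)
  · rfl

/-- Block `i` here is block `i + 1` of the paper, whose label must hit
`m_i − R_{i-1}(m_{i-1})`, with `R_{-1} = R_0 = 0`. -/
def massBalance {n : ℕ} {Ω : Fin n → Type*} (m0 : ℕ) (R : ∀ i : Fin n, ℕ → Ω i → ℕ)
    (i : Fin n) (mv : Fin n → ℕ) (ω : ∀ j, Ω j) : ℤ :=
  (prevVal n m0 mv i : ℤ)
    - (if 2 ≤ (i : ℕ) then
        (R ⟨(i : ℕ) - 2, lt_of_le_of_lt (Nat.sub_le _ _) i.isLt⟩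
          (prevVal n m0 mv ((i : ℕ) - 1))
          (ω ⟨(i : ℕ) - 2, lt_of_le_of_lt (Nat.sub_le _ _) i.isLt⟩) : ℤ)
      else 0)

theorem dependsOnPast_massBalance {n : ℕ} {Ω : Fin n → Type*} (m0 : ℕ)
    (R : ∀ i : Fin n, ℕ → Ω i → ℕ) : DependsOnPast (massBalance m0 R) := by
  intro i mv mv' ω ω' hmv hω
  have hprev {t : ℕ} (ht : t ≤ i) : prevVal n m0 mv t = prevVal n m0 mv' t :=
    prevVal_congr fun j hj => hmv j (by omega)
  unfold massBalance
  split_ifs with h2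
  · rw [hprev le_rfl, hprev (Nat.sub_le _ _), hω _ (Fin.lt_def.2 (by simp only; omega))]
  · rw [hprev le_rfl]

theorem measurable_massBalance {n : ℕ} {Ω : Fin n → Type*} [∀ i, MeasurableSpace (Ω i)]
    (m0 : ℕ) {R : ∀ i : Fin n, ℕ → Ω i → ℕ} (hR : ∀ i m, Measurable (R i m))
    (i : Fin n) (mv : Fin n → ℕ) : Measurable (massBalance m0 R i mv) := by
  unfold massBalance
  split_ifs
  · exact measurable_const.sub (measurable_from_top.comp ((hR _ _).comp (measurable_pi_apply _)))
  · exact measurable_const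

theorem block_decoupling_general
    (n r : ℕ) (α : ℝ)
    (Ω : Fin n → Type*) [∀ i, MeasurableSpace (Ω i)]
    (μ : ∀ i, Measure (Ω i)) [∀ i, IsProbabilityMeasure (μ i)]
    (S : ∀ i : Fin n, ℕ → Ω i → ℝ)
    (L R : ∀ i : Fin n, ℕ → Ω i → ℕ)
    (hSmeas : ∀ i m, Measurable (S i m))
    (hLmeas : ∀ i m, Measurable (L i m))
    (hRmeas : ∀ i m, Measurable (R i m))
    (Mb : ℝ≥0∞)
    (hblock : ∀ i : Fin n, ∀ ℓ : ℤ,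
      ∑' m : ℕ, ∫⁻ ω, (if (L i m ω : ℤ) = ℓ
          then ENNReal.ofReal (Real.exp (α * S i m ω)) else 0) ∂(μ i) ≤ Mb)
    (A : Finset ℕ) (hA : A.card ≤ r) :
    ∑ m0 ∈ A, ∫⁻ ω, ∑' mv : Fin n → ℕ, ∏ i : Fin n,
        (if (L i (mv i) (ω i) : ℤ)
            = (prevVal n m0 mv i : ℤ)
              - (if 2 ≤ (i : ℕ) then
                  (R ⟨(i : ℕ) - 2, lt_of_le_of_lt (Nat.sub_le _ _) i.isLt⟩
                    (prevVal n m0 mv ((i : ℕ) - 1))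
                    (ω ⟨(i : ℕ) - 2, lt_of_le_of_lt (Nat.sub_le _ _) i.isLt⟩) : ℤ)
                else 0)
          then ENNReal.ofReal (Real.exp (α * S i (mv i) (ω i))) else 0)
      ∂(Measure.pi μ)
    ≤ (r : ℝ≥0∞) * Mb ^ n := by
  have hweight (m0 : ℕ) (i : Fin n) (mv : Fin n → ℕ) : Measurable fun ω : ∀ j, Ω j =>
      if (L i (mv i) (ω i) : ℤ) = massBalance m0 R i mv ω
        then ENNReal.ofReal (Real.exp (α * S i (mv i) (ω i))) else 0 := by
    refine .ite (measurableSet_eq_fun ?_ (measurable_massBalance m0 hRmeas i mv)) ?_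
      measurable_const
    · exact measurable_from_top.comp ((hLmeas i (mv i)).comp (measurable_pi_apply i))
    · fun_prop
  calc _ ≤ A.card • Mb ^ n := Finset.sum_le_card_nsmul _ _ _ fun m0 _ =>
        lintegral_constrainedMass_le μ (dependsOnPast_massBalance m0 R) (hweight m0) hblock
    _ ≤ (r : ℝ≥0∞) * Mb ^ n := by
      rw [nsmul_eq_mul]
      gcongr

/-- Abstract block-decoupling inequality (Basu–Ganguly–Hoffman framework): blocks
`i = 1, …, n` carry independent randomness (coordinates of a product probability
space); if each block satisfies the single-block bound
`sup_ℓ Σ_m E[e^{α S_i(m)} 1_{L_i(m) = ℓ}] ≤ M`, then summing over all tuples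
`(m₁,…,mₙ)` compatible with the mass balance constraints
`L_i(m_i) = m_{i-1} − R_{i-2}(m_{i-2})` (with `R_{-1} = R_0 ≡ 0`), and over the at
most `r` possible values of `m₀`, gives total mass at most `r·Mⁿ`. -/
theorem block_decoupling
    (n r : ℕ) (α : ℝ) (hα : 0 < α)
    (Ω : Fin n → Type*) [∀ i, MeasurableSpace (Ω i)]
    (μ : ∀ i, Measure (Ω i)) [∀ i, IsProbabilityMeasure (μ i)]
    (S : ∀ i : Fin n, ℕ → Ω i → ℝ)
    (L R : ∀ i : Fin n, ℕ → Ω i → ℕ)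
    (hSmeas : ∀ i m, Measurable (S i m))
    (hLmeas : ∀ i m, Measurable (L i m))
    (hRmeas : ∀ i m, Measurable (R i m))
    (hSnonneg : ∀ i m ω, 0 ≤ S i m ω)
    (Mb : ℝ≥0∞)
    (hblock : ∀ i : Fin n, ∀ ℓ : ℤ,
      ∑' m : ℕ, ∫⁻ ω, (if (L i m ω : ℤ) = ℓ
          then ENNReal.ofReal (Real.exp (α * S i m ω)) else 0) ∂(μ i) ≤ Mb)
    (A : Finset ℕ) (hA : A.card ≤ r) :
    ∑ m0 ∈ A, ∫⁻ ω, ∑' mv : Fin n → ℕ, ∏ i : Fin n,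
        (if (L i (mv i) (ω i) : ℤ)
            = (prevVal n m0 mv i : ℤ)
              - (if 2 ≤ (i : ℕ) then
                  (R ⟨(i : ℕ) - 2, lt_of_le_of_lt (Nat.sub_le _ _) i.isLt⟩
                    (prevVal n m0 mv ((i : ℕ) - 1))
                    (ω ⟨(i : ℕ) - 2, lt_of_le_of_lt (Nat.sub_le _ _) i.isLt⟩) : ℤ)
                else 0)
          then ENNReal.ofReal (Real.exp (α * S i (mv i) (ω i))) else 0)
      ∂(Measure.pi μ)
    ≤ (r : ℝ≥0∞) * Mb ^ n :=
  block_decoupling_general n r α Ω μ S L R hSmeas hLmeas hRmeas Mb hblock A hA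
end
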